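/- arXiv:2605.07916 — 4 statements merged into one kernel-verified Lean document; each statement's English description precedes it below -/
import Mathlib

section
/- Let A ⊆ 𝔽_p^n have density α ∈ (0,1] and let ε ∈ (0,1). Then there exists a subspace V ≤ 𝔽_p^n with dim(V) ≤ (2/ε²)·log(1/α) such that for every ξ ∉ V one has 𝔼_{y ∈ 𝔽_p^n/V^⊥} | 𝔼_{x ∈ y+V^⊥} 1_A(x)·conj(χ_ξ(x)) | ≤ εα. -/
open scoped Classical BigOperators
open Finset

/-- The character `χ_ξ(x) = e^{2πi⟨ξ,x⟩/p}` on `𝔽_p^n`. -/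
noncomputable def chi (p n : ℕ) [NeZero p] (ξ x : Fin n → ZMod p) : ℂ :=
  Complex.exp (2 * Real.pi * Complex.I * ((∑ i, ξ i * x i : ZMod p).val : ℂ) / p)

/-- Fourier transform `f^(ξ) = 𝔼_x f(x) conj(χ_ξ(x))`. -/
noncomputable def ft (p n : ℕ) [NeZero p] (f : (Fin n → ZMod p) → ℂ) (ξ : Fin n → ZMod p) : ℂ :=
  (∑ x, f x * (starRingEnd ℂ) (chi p n ξ x)) / (p : ℂ) ^ n

/-- indicator of a finset -/
noncomputable def ind {p n : ℕ} [NeZero p] (A : Finset (Fin n → ZMod p)) (x : Fin n → ZMod p) : ℂ :=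
  if x ∈ A then 1 else 0

/-- Orthogonal complement of a subspace w.r.t. the standard bilinear form. -/
def perp (p n : ℕ) [NeZero p] (V : Submodule (ZMod p) (Fin n → ZMod p)) :
    Submodule (ZMod p) (Fin n → ZMod p) where
  carrier := {x | ∀ η ∈ V, ∑ i, x i * η i = 0}
  zero_mem' := by intro η _; simp
  add_mem' := by
    intro a b ha hb η hη
    simpa [add_mul, Finset.sum_add_distrib] using by rw [ha η hη, hb η hη, add_zero]
  smul_mem' := by
    intro c a ha η hη
    have h := ha η hη
    simp only [Pi.smul_apply, smul_eq_mul, mul_assoc, ← Finset.mul_sum]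
    rw [h, mul_zero]

/-! Entropy increment. For a subspace `V`, let `d_V(t)` be the density of `A` on `t + V^⊥` and
`Φ(V) = 𝔼_t -d_V(t) log d_V(t)`; then `Φ(0) = -α log α` and `Φ ≥ 0`. If some `ξ ∉ V` violates the
bound, pass to `V' = V + ⟨ξ⟩`. The character `conj χ_ξ` is constant on the cosets of `V'^⊥` and sums
to zero over each coset of `V^⊥`, so its coefficient on a coset of `V^⊥` is bounded by the `ℓ¹`
deviation of the densities `d_{V'}` from their mean `d_V`. Pinsker's inequality on each coset and
Cauchy–Schwarz over the cosets turn this into `Φ(V') ≤ Φ(V) - ε²α/2`, so the process stops after at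
most `(2/ε²) log(1/α)` steps. -/

open Real InformationTheory

lemma monotoneOn_add_one_mul_log_sub :
    MonotoneOn (fun x : ℝ => (x + 1) * log x - 2 * (x - 1)) (Set.Ioi 0) := by
  have hd : ∀ x : ℝ, 0 < x →
      HasDerivAt (fun x : ℝ => (x + 1) * log x - 2 * (x - 1)) (log x + (1 + x⁻¹) - 2) x := by
    intro x hx
    refine ((((hasDerivAt_id x).add_const 1).mul (hasDerivAt_log hx.ne')).sub
      (((hasDerivAt_id x).sub_const 1).const_mul 2)).congr_deriv ?_
    simp only [id]
    field_simp
  refine monotoneOn_of_deriv_nonneg (convex_Ioi 0)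
    (fun x hx => (hd x hx).continuousAt.continuousWithinAt)
    (fun x hx => (hd x (interior_subset hx)).differentiableAt.differentiableWithinAt)
    (fun x hx => ?_)
  rw [interior_Ioi] at hx
  rw [(hd x hx).deriv]
  linarith [one_sub_inv_le_log_of_pos (show (0 : ℝ) < x from hx)]

lemma three_mul_sq_sub_one_le_klFun {x : ℝ} (hx : 0 ≤ x) :
    3 * (x - 1) ^ 2 ≤ 2 * (x + 2) * klFun x := by
  set g : ℝ → ℝ := fun x => 2 * (x + 2) * klFun x - 3 * (x - 1) ^ 2
  have hd : ∀ x : ℝ, 0 < x → HasDerivAt g (4 * ((x + 1) * log x - 2 * (x - 1))) x := by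
    intro x hx
    refine (((((hasDerivAt_id x).add_const 2).const_mul 2).mul (hasDerivAt_klFun hx.ne')).sub
      ((((hasDerivAt_id x).sub_const 1).pow 2).const_mul 3)).congr_deriv ?_
    simp only [klFun_apply, id]
    ring
  -- `g' = 4 h` where `h` is monotone with `h 1 = 0`, so `g' ≤ 0` on `(0, 1)` and `g' ≥ 0` after.
  have hmin : IsMinOn g (Set.Ioi 0) 1 := by
    refine isMinOn_Ioi_of_deriv (hd 1 one_pos).continuousAt
      (fun x hx => (hd x hx.1).differentiableAt.differentiableWithinAt)
      (fun x hx => (hd x (one_pos.trans hx)).differentiableAt.differentiableWithinAt)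
      (fun x hx => ?_) (fun x hx => ?_)
    · rw [(hd x hx.1).deriv]
      have := monotoneOn_add_one_mul_log_sub hx.1 (Set.mem_Ioi.2 one_pos) hx.2.le
      norm_num at this
      linarith
    · have hx1 : (1 : ℝ) < x := hx
      rw [(hd x (one_pos.trans hx1)).deriv]
      have := monotoneOn_add_one_mul_log_sub (Set.mem_Ioi.2 one_pos)
        (Set.mem_Ioi.2 (one_pos.trans hx1)) hx1.le
      norm_num at this
      linarith
  rcases hx.eq_or_lt with rfl | hx
  · norm_num [klFun_zero]
  · have := hmin hx
    simp only [Set.mem_ofPred_eq, g, klFun_one] at this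
    linarith

lemma Finset.sq_expect_le_expect_mul_expect_of_sq_le_mul {ι R : Type*} [Field R] [LinearOrder R]
    [IsStrictOrderedRing R] (s : Finset ι) {r f g : ι → R} (hf : ∀ i ∈ s, 0 ≤ f i)
    (hg : ∀ i ∈ s, 0 ≤ g i) (ht : ∀ i ∈ s, r i ^ 2 ≤ f i * g i) :
    (𝔼 i ∈ s, r i) ^ 2 ≤ (𝔼 i ∈ s, f i) * 𝔼 i ∈ s, g i := by
  simp only [expect_eq_sum_div_card, div_pow, div_mul_div_comm, ← sq]
  gcongr
  exact sum_sq_le_sum_mul_sum_of_sq_le_mul s hf hg ht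

section Pinsker

variable {ι : Type*} [Fintype ι]

lemma sq_expect_abs_sub_one_le_two_mul_expect_klFun {x : ι → ℝ} (hx : ∀ i, 0 ≤ x i)
    (h1 : 𝔼 i, x i = 1) : (𝔼 i, |x i - 1|) ^ 2 ≤ 2 * 𝔼 i, klFun (x i) := by
  have : Nonempty ι :=
    let ⟨i, _⟩ := Finset.exists_ne_zero_of_expect_ne_zero (h1.trans_ne one_ne_zero); ⟨i⟩
  have hpos : ∀ i, 0 < x i + 2 := fun i => by linarith [hx i]
  calc (𝔼 i, |x i - 1|) ^ 2
      ≤ (𝔼 i, (x i - 1) ^ 2 / (x i + 2)) * 𝔼 i, (x i + 2) :=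
        Finset.sq_expect_le_expect_mul_expect_of_sq_le_mul _
          (fun i _ => div_nonneg (sq_nonneg _) (hpos i).le) (fun i _ => (hpos i).le)
          (fun i _ => by rw [sq_abs, div_mul_cancel₀ _ (hpos i).ne'])
    _ = 𝔼 i, 3 * (x i - 1) ^ 2 / (x i + 2) := by
        rw [Finset.expect_add_distrib, h1, Fintype.expect_const, mul_comm, Finset.mul_expect]
        norm_num [mul_div_assoc]
    _ ≤ 𝔼 i, 2 * klFun (x i) := Finset.expect_le_expect fun i _ => by
        rw [div_le_iff₀ (hpos i)]
        linarith [three_mul_sq_sub_one_le_klFun (hx i)]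
    _ = 2 * 𝔼 i, klFun (x i) := (Finset.mul_expect _ _ _).symm

/-- Pinsker's inequality against the uniform distribution on `ι`. -/
theorem sq_expect_abs_sub_expect_le_two_mul_negMulLog_sub {c : ι → ℝ} (hc : ∀ i, 0 ≤ c i) :
    (𝔼 i, |c i - 𝔼 j, c j|) ^ 2
      ≤ 2 * (𝔼 i, c i) * (negMulLog (𝔼 i, c i) - 𝔼 i, negMulLog (c i)) := by
  rcases (Finset.expect_nonneg fun i _ => hc i).eq_or_lt with ha0 | ha0
  · have hc0 : c = 0 := (Fintype.expect_eq_zero_iff_of_nonneg hc).1 ha0.symm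
    simp [hc0]
  set a := 𝔼 i, c i with ha
  set x : ι → ℝ := fun i => c i / a
  have hcx : ∀ i, c i = a * x i := fun i => (mul_div_cancel₀ _ ha0.ne').symm
  have hx1 : 𝔼 i, x i = 1 := by rw [← Finset.expect_div, ← ha, div_self ha0.ne']
  have habs : 𝔼 i, |c i - a| = a * 𝔼 i, |x i - 1| := by
    rw [Finset.mul_expect]
    refine Finset.expect_congr rfl fun i _ => ?_
    rw [hcx, ← mul_sub_one, abs_mul, abs_of_pos ha0]
  have hkl : ∀ i, klFun (x i) = (1 - x i) - negMulLog (x i) := fun i => by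
    rw [klFun_apply, negMulLog]; ring
  have hgap : negMulLog a - 𝔼 i, negMulLog (c i) = a * 𝔼 i, klFun (x i) := by
    simp only [hcx, negMulLog_mul, hkl, Finset.expect_add_distrib, Finset.expect_sub_distrib,
      ← Finset.expect_mul, ← Finset.mul_expect, hx1]
    have : Nonempty ι := let ⟨i, _⟩ := Finset.exists_ne_zero_of_expect_ne_zero ha0.ne'; ⟨i⟩
    rw [Fintype.expect_const]
    ring
  rw [habs, hgap, mul_pow]
  nlinarith [sq_expect_abs_sub_one_le_two_mul_expect_klFun (fun i => div_nonneg (hc i) ha0.le) hx1]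

end Pinsker

section CosetAverage

variable {G : Type*} [AddCommGroup G] [Fintype G]

noncomputable def cosetAvg {M : Type*} [AddCommMonoid M] [Module ℚ≥0 M] (K : AddSubgroup G)
    (f : G → M) (x : G) : M :=
  𝔼 k : K, f (x + k)

variable {M : Type*} [AddCommMonoid M] [Module ℚ≥0 M] {K H : AddSubgroup G}

lemma cosetAvg_add_of_mem (f : G → M) {k : G} (hk : k ∈ K) (x : G) :
    cosetAvg K f (x + k) = cosetAvg K f x :=
  Fintype.expect_equiv (Equiv.addLeft ⟨k, hk⟩) _ _ fun j => by simp [add_assoc]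

lemma expect_cosetAvg (f : G → M) : 𝔼 x, cosetAvg K f x = 𝔼 x, f x := by
  unfold cosetAvg
  rw [Finset.expect_comm]
  have htranslate (k : K) : 𝔼 x, f (x + k) = 𝔼 x, f x :=
    Fintype.expect_equiv (Equiv.addRight (k : G)) _ _ fun _ => rfl
  simp only [htranslate, Fintype.expect_const]

lemma cosetAvg_cosetAvg_of_le (hHK : H ≤ K) (f : G → M) :
    cosetAvg K (cosetAvg H f) = cosetAvg K f := by
  funext x
  have hshift (h : H) : 𝔼 k : K, f (x + k + h) = cosetAvg K f x := by
    rw [← cosetAvg_add_of_mem f (hHK h.2) x, cosetAvg]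
    simp only [add_right_comm]
  conv_lhs => unfold cosetAvg
  rw [Finset.expect_comm]
  simp only [hshift, Fintype.expect_const]

lemma cosetAvg_nonneg {f : G → ℝ} (hf : 0 ≤ f) (x : G) : 0 ≤ cosetAvg K f x :=
  Finset.expect_nonneg fun _ _ => hf _

lemma cosetAvg_le_one {f : G → ℝ} (hf : f ≤ 1) (x : G) : cosetAvg K f x ≤ 1 :=
  Finset.expect_le Finset.univ_nonempty fun _ _ => hf _

lemma cosetAvg_top (f : G → M) (x : G) : cosetAvg ⊤ f x = 𝔼 y, f y :=
  Fintype.expect_equiv ((Equiv.subtypeUnivEquiv AddSubgroup.mem_top).trans (Equiv.addLeft x))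
    _ _ fun _ => rfl

lemma cosetAvg_mul_addChar {R : Type*} [CommSemiring R] [Module ℚ≥0 R] [IsScalarTower ℚ≥0 R R]
    (F : G → R) {ψ : AddChar G R} (hψ : ∀ h ∈ H, ψ h = 1) (x : G) :
    cosetAvg H (fun y => F y * ψ y) x = cosetAvg H F x * ψ x := by
  simp only [cosetAvg, AddChar.map_add_eq_mul, hψ _ (Subtype.property _), mul_one,
    Finset.expect_mul]

lemma cosetAvg_addChar_eq_zero {R : Type*} [CommRing R] [IsDomain R] [Module ℚ≥0 R]
    [SMulCommClass ℚ≥0 R R] {ψ : AddChar G R} (hψ : ∃ k ∈ K, ψ k ≠ 1) (x : G) :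
    cosetAvg K ψ x = 0 := by
  obtain ⟨k, hk, hψk⟩ := hψ
  have hsum : ∑ j : K, ψ j = 0 :=
    AddChar.sum_eq_zero_of_ne_one (ψ := ψ.compAddMonoidHom K.subtype)
      (AddChar.ne_one_iff.2 ⟨⟨k, hk⟩, hψk⟩)
  simp only [cosetAvg, AddChar.map_add_eq_mul, Finset.expect, ← Finset.mul_sum, hsum, mul_zero,
    smul_zero]

end CosetAverage

section CosetEntropy

variable {G : Type*} [AddCommGroup G] [Fintype G] {K H : AddSubgroup G}

lemma norm_cosetAvg_mul_addChar_le (hHK : H ≤ K) {ψ : AddChar G ℂ} (hψH : ∀ h ∈ H, ψ h = 1)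
    (hψK : ∃ k ∈ K, ψ k ≠ 1) (f : G → ℝ) (t : G) :
    ‖cosetAvg K (fun x => (f x : ℂ) * ψ x) t‖
      ≤ cosetAvg K (fun x => |cosetAvg H f x - cosetAvg K f t|) t := by
  -- `ψ` is constant on the cosets of `H` and has mean zero on those of `K`.
  have hbalanced : cosetAvg K (fun x => (f x : ℂ) * ψ x) t
      = 𝔼 k : K, ((cosetAvg H f (t + k) - cosetAvg K f t : ℝ) : ℂ) * ψ (t + k) := by
    have hH : cosetAvg H (fun x => (f x : ℂ) * ψ x)
        = fun x => ((cosetAvg H f x : ℝ) : ℂ) * ψ x := by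
      funext x
      rw [cosetAvg_mul_addChar _ hψH, cosetAvg, cosetAvg, Complex.ofReal_expect]
    have hψ0 := cosetAvg_addChar_eq_zero hψK t
    rw [← cosetAvg_cosetAvg_of_le hHK, hH]
    simp only [cosetAvg] at hψ0 ⊢
    simp only [Complex.ofReal_sub, sub_mul, Finset.expect_sub_distrib, ← Finset.mul_expect, hψ0,
      mul_zero, sub_zero]
  rw [hbalanced]
  refine (RCLike.norm_expect_le (K := ℂ)).trans_eq ?_
  simp only [norm_mul, AddChar.norm_apply, mul_one, Complex.norm_real, Real.norm_eq_abs, cosetAvg]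

lemma ConcaveOn.expect_le_map_expect {ι : Type*} [Fintype ι] [Nonempty ι] {s : Set ℝ}
    {g : ℝ → ℝ} (hg : ConcaveOn ℝ s g) {c : ι → ℝ} (hc : ∀ i, c i ∈ s) :
    𝔼 i, g (c i) ≤ g (𝔼 i, c i) := by
  have hcard : (0 : ℝ) < Fintype.card ι := Nat.cast_pos.2 Fintype.card_pos
  have := hg.le_map_sum (t := Finset.univ) (w := fun _ => (Fintype.card ι : ℝ)⁻¹)
    (fun _ _ => by positivity) (by simp [hcard.ne']) (fun i _ => hc i)
  simpa [Fintype.expect_eq_sum_div_card, div_eq_inv_mul, Finset.mul_sum] using this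

noncomputable def cosetEntropy (K : AddSubgroup G) (f : G → ℝ) : ℝ :=
  𝔼 t, negMulLog (cosetAvg K f t)

lemma sq_cosetAvg_abs_sub_le (hHK : H ≤ K) {f : G → ℝ} (hf : 0 ≤ f) (t : G) :
    cosetAvg K (fun x => |cosetAvg H f x - cosetAvg K f t|) t ^ 2
      ≤ 2 * cosetAvg K f t
          * (negMulLog (cosetAvg K f t) - cosetAvg K (negMulLog ∘ cosetAvg H f) t) := by
  have hpinsker := sq_expect_abs_sub_expect_le_two_mul_negMulLog_sub
    (c := fun k : K => cosetAvg H f (t + k)) fun _ => cosetAvg_nonneg hf _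
  rwa [← congrFun (cosetAvg_cosetAvg_of_le hHK f) t]

lemma cosetAvg_negMulLog_le (hHK : H ≤ K) {f : G → ℝ} (hf : 0 ≤ f) (t : G) :
    cosetAvg K (negMulLog ∘ cosetAvg H f) t ≤ negMulLog (cosetAvg K f t) := by
  rw [← congrFun (cosetAvg_cosetAvg_of_le hHK f) t]
  exact concaveOn_negMulLog.expect_le_map_expect fun _ => Set.mem_Ici.2 (cosetAvg_nonneg hf _)

theorem sq_expect_norm_cosetAvg_mul_addChar_le (hHK : H ≤ K) {ψ : AddChar G ℂ}
    (hψH : ∀ h ∈ H, ψ h = 1) (hψK : ∃ k ∈ K, ψ k ≠ 1) {f : G → ℝ} (hf : 0 ≤ f) :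
    (𝔼 t, ‖cosetAvg K (fun x => (f x : ℂ) * ψ x) t‖) ^ 2
      ≤ 2 * (cosetEntropy K f - cosetEntropy H f) * 𝔼 x, f x := by
  have hgap : 2 * (cosetEntropy K f - cosetEntropy H f)
      = 𝔼 t, 2 * (negMulLog (cosetAvg K f t) - cosetAvg K (negMulLog ∘ cosetAvg H f) t) := by
    rw [← Finset.mul_expect, Finset.expect_sub_distrib, expect_cosetAvg, cosetEntropy,
      cosetEntropy]
    rfl
  rw [hgap, ← expect_cosetAvg (K := K) f]
  refine Finset.sq_expect_le_expect_mul_expect_of_sq_le_mul _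
    (fun t _ => mul_nonneg zero_le_two (sub_nonneg.2 (cosetAvg_negMulLog_le hHK hf t)))
    (fun t _ => cosetAvg_nonneg hf t) fun t _ => ?_
  calc ‖cosetAvg K (fun x => (f x : ℂ) * ψ x) t‖ ^ 2
      ≤ cosetAvg K (fun x => |cosetAvg H f x - cosetAvg K f t|) t ^ 2 :=
        pow_le_pow_left₀ (norm_nonneg _) (norm_cosetAvg_mul_addChar_le hHK hψH hψK f t) 2
    _ ≤ _ := (sq_cosetAvg_abs_sub_le hHK hf t).trans_eq (by ring)

lemma cosetEntropy_nonneg {f : G → ℝ} (hf₀ : 0 ≤ f) (hf₁ : f ≤ 1) : 0 ≤ cosetEntropy K f :=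
  Finset.expect_nonneg fun _ _ => negMulLog_nonneg (cosetAvg_nonneg hf₀ _) (cosetAvg_le_one hf₁ _)

lemma cosetEntropy_top (f : G → ℝ) : cosetEntropy ⊤ f = negMulLog (𝔼 x, f x) := by
  simp only [cosetEntropy, cosetAvg_top, Fintype.expect_const]

end CosetEntropy

theorem exists_rank_mul_le_of_decrement {ι : Type*} (r : ι → ℕ) (E : ι → ℝ) (P : ι → Prop)
    {δ : ℝ} (hδ : 0 < δ) (hE : ∀ i, 0 ≤ E i) (i₀ : ι) (hi₀ : r i₀ = 0)
    (hstep : ∀ i, ¬ P i → ∃ j, r j = r i + 1 ∧ E j + δ ≤ E i) :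
    ∃ i, P i ∧ r i * δ ≤ E i₀ := by
  by_contra! hbad
  have hchain (k : ℕ) : ∃ i, r i = k ∧ E i + k * δ ≤ E i₀ := by
    induction k with
    | zero => exact ⟨i₀, hi₀, by simp⟩
    | succ k ih =>
      obtain ⟨i, hik, hi⟩ := ih
      by_cases hPi : P i
      · have := hbad i hPi
        rw [hik] at this
        linarith [hE i]
      obtain ⟨j, hj, hji⟩ := hstep i hPi
      exact ⟨j, by rw [hj, hik], by push_cast; linarith⟩
  obtain ⟨k, hk⟩ := exists_nat_gt (E i₀ / δ)
  obtain ⟨i, -, hi⟩ := hchain k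
  rw [div_lt_iff₀ hδ] at hk
  linarith [hE i]

section Perp

variable {p n : ℕ} [NeZero p]

lemma perp_antitone : Antitone (perp p n) :=
  fun _ _ hVW _ hx η hη => hx η (hVW hη)

lemma perp_bot : perp p n ⊥ = ⊤ :=
  eq_top_iff.2 fun x _ η hη => by simp [(Submodule.mem_bot _).1 hη]

lemma exists_mem_perp_dotProduct_ne_zero [Fact p.Prime] {V : Submodule (ZMod p) (Fin n → ZMod p)}
    {ξ : Fin n → ZMod p} (hξ : ξ ∉ V) : ∃ k ∈ perp p n V, k ⬝ᵥ ξ ≠ 0 := by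
  rw [← Subspace.forall_mem_dualAnnihilator_apply_eq_zero_iff] at hξ
  push Not at hξ
  obtain ⟨φ, hφ, hφξ⟩ := hξ
  have hdot (x : Fin n → ZMod p) : (dotProductEquiv (ZMod p) (Fin n)).symm φ ⬝ᵥ x = φ x :=
    LinearMap.congr_fun ((dotProductEquiv (ZMod p) (Fin n)).apply_symm_apply φ) x
  exact ⟨_, fun η hη => (hdot η).trans ((Submodule.mem_dualAnnihilator φ).1 hφ η hη),
    (hdot ξ).trans_ne hφξ⟩

noncomputable def dotChar (ξ : Fin n → ZMod p) : AddChar (Fin n → ZMod p) ℂ :=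
  ZMod.stdAddChar.compAddMonoidHom (dotProductEquiv (ZMod p) (Fin n) ξ).toAddMonoidHom

lemma dotChar_apply (ξ x : Fin n → ZMod p) : dotChar ξ x = ZMod.stdAddChar (ξ ⬝ᵥ x) := rfl

lemma chi_eq_dotChar (ξ x : Fin n → ZMod p) : chi p n ξ x = dotChar ξ x := by
  rw [dotChar_apply, ZMod.stdAddChar_apply, ZMod.toCircle_apply, chi, dotProduct]

lemma dotChar_eq_one_iff {ξ x : Fin n → ZMod p} : dotChar ξ x = 1 ↔ ξ ⬝ᵥ x = 0 := by
  rw [dotChar_apply, ← AddChar.map_zero_eq_one (ZMod.stdAddChar (N := p)),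
    ZMod.injective_stdAddChar.eq_iff]

end Perp

section Energy

variable {p n : ℕ} [NeZero p] (A : Finset (Fin n → ZMod p))

noncomputable def perpEntropy (V : Submodule (ZMod p) (Fin n → ZMod p)) : ℝ :=
  cosetEntropy (perp p n V).toAddSubgroup fun x => if x ∈ A then 1 else 0

noncomputable def cosetFourierMass (V : Submodule (ZMod p) (Fin n → ZMod p))
    (ξ : Fin n → ZMod p) : ℝ :=
  (∑ t, ‖(∑ w : perp p n V,
      ind A (t + (w : Fin n → ZMod p)) * (starRingEnd ℂ) (chi p n ξ (t + (w : Fin n → ZMod p))))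
    / (Fintype.card (perp p n V) : ℂ)‖) / (p : ℝ) ^ n

lemma card_fun_fin_zmod : (Fintype.card (Fin n → ZMod p) : ℝ) = (p : ℝ) ^ n := by
  simp

lemma expect_ite_mem_eq_card_div : 𝔼 x, (if x ∈ A then (1 : ℝ) else 0) = A.card / (p : ℝ) ^ n := by
  rw [Fintype.expect_eq_sum_div_card, Finset.sum_boole, Finset.filter_mem_eq_inter,
    Finset.univ_inter, card_fun_fin_zmod]

lemma perpEntropy_nonneg (V : Submodule (ZMod p) (Fin n → ZMod p)) : 0 ≤ perpEntropy A V :=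
  cosetEntropy_nonneg (fun _ => by positivity) (fun _ => by dsimp; split_ifs <;> norm_num)

lemma perpEntropy_bot : perpEntropy A ⊥ = negMulLog (A.card / (p : ℝ) ^ n) := by
  rw [perpEntropy, perp_bot, Submodule.top_toAddSubgroup, cosetEntropy_top,
    expect_ite_mem_eq_card_div]

lemma cosetFourierMass_eq (V : Submodule (ZMod p) (Fin n → ZMod p)) (ξ : Fin n → ZMod p) :
    cosetFourierMass A V ξ = 𝔼 t, ‖cosetAvg (perp p n V).toAddSubgroup
      (fun x => ((if x ∈ A then 1 else 0 : ℝ) : ℂ) * (dotChar ξ)⁻¹ x) t‖ := by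
  have hterm (x : Fin n → ZMod p) : ind A x * (starRingEnd ℂ) (chi p n ξ x)
      = ((if x ∈ A then 1 else 0 : ℝ) : ℂ) * (dotChar ξ)⁻¹ x := by
    rw [chi_eq_dotChar, ← AddChar.map_neg_eq_conj, ← AddChar.inv_apply, ind]
    split_ifs <;> simp
  simp only [cosetFourierMass, hterm, cosetAvg, Fintype.expect_eq_sum_div_card, card_fun_fin_zmod]
  rfl

lemma sq_cosetFourierMass_le [Fact p.Prime] {V : Submodule (ZMod p) (Fin n → ZMod p)}
    {ξ : Fin n → ZMod p} (hξ : ξ ∉ V) :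
    cosetFourierMass A V ξ ^ 2 ≤
      2 * (perpEntropy A V - perpEntropy A (V ⊔ Submodule.span (ZMod p) {ξ}))
        * (A.card / (p : ℝ) ^ n) := by
  rw [cosetFourierMass_eq, ← expect_ite_mem_eq_card_div]
  refine sq_expect_norm_cosetAvg_mul_addChar_le (perp_antitone le_sup_left) (fun h hh => ?_) ?_
    fun _ => by positivity
  · rw [AddChar.inv_apply', inv_eq_one, dotChar_eq_one_iff, dotProduct_comm]
    exact hh ξ (Submodule.mem_sup_right (Submodule.mem_span_singleton_self ξ))
  · obtain ⟨k, hk, hkξ⟩ := exists_mem_perp_dotProduct_ne_zero hξ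
    refine ⟨k, hk, ?_⟩
    rwa [AddChar.inv_apply', inv_ne_one, Ne, dotChar_eq_one_iff, dotProduct_comm]

end Energy

/-- The average over the cosets of `perp p n V` is written as an average over all shifts `t`,
which is the same since all cosets have the same size. -/
theorem strengthened_chang_general (p n : ℕ) (hp : p.Prime) [NeZero p]
    (A : Finset (Fin n → ZMod p)) (α ε : ℝ)
    (hα : (A.card : ℝ) = α * (p : ℝ) ^ n) (hα0 : 0 < α)
    (hε0 : 0 < ε) :
    ∃ V : Submodule (ZMod p) (Fin n → ZMod p),
      (Module.finrank (ZMod p) V : ℝ) ≤ 2 / ε ^ 2 * Real.log (1 / α) ∧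
      ∀ ξ ∉ V,
        (∑ t, ‖(∑ w : perp p n V,
                ind A (t + (w : Fin n → ZMod p)) *
                  (starRingEnd ℂ) (chi p n ξ (t + (w : Fin n → ZMod p))))
              / (Fintype.card (perp p n V) : ℂ)‖) / (p : ℝ) ^ n
          ≤ ε * α := by
  have := Fact.mk hp
  have hdensity : (A.card : ℝ) / (p : ℝ) ^ n = α := by
    rw [hα, mul_div_cancel_right₀ _ (pow_ne_zero _ (Nat.cast_ne_zero.2 (NeZero.ne p)))]
  have hstep (V : Submodule (ZMod p) (Fin n → ZMod p))
      (hV : ¬ ∀ ξ ∉ V, cosetFourierMass A V ξ ≤ ε * α) :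
      ∃ W : Submodule (ZMod p) (Fin n → ZMod p), Module.finrank (ZMod p) W
        = Module.finrank (ZMod p) V + 1 ∧ perpEntropy A W + ε ^ 2 * α / 2 ≤ perpEntropy A V := by
    push Not at hV
    obtain ⟨ξ, hξ, hmass⟩ := hV
    refine ⟨V ⊔ Submodule.span (ZMod p) {ξ}, Submodule.finrank_sup_span_singleton hξ, ?_⟩
    have hsq := sq_cosetFourierMass_le A hξ
    rw [hdensity] at hsq
    nlinarith [mul_pos hε0 hα0]
  obtain ⟨V, hgood, hrank⟩ := exists_rank_mul_le_of_decrement (δ := ε ^ 2 * α / 2)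
    (fun V : Submodule (ZMod p) (Fin n → ZMod p) => Module.finrank (ZMod p) V) (perpEntropy A) _
    (by positivity) (perpEntropy_nonneg A) ⊥ (finrank_bot _ _) hstep
  refine ⟨V, ?_, hgood⟩
  rw [perpEntropy_bot, hdensity, Real.negMulLog] at hrank
  rw [one_div, Real.log_inv, div_mul_eq_mul_div, le_div_iff₀ (by positivity)]
  nlinarith

/-- Strengthened Chang's lemma: the average over cosets of `perp V` of the fibrewise
Fourier averages is small outside `V`.  (The average over cosets is written as
an average over all shifts `t`, which is the same since all cosets of `perp V`
have equal size.) -/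
theorem strengthened_chang (p n : ℕ) (hp : p.Prime) [NeZero p]
    (A : Finset (Fin n → ZMod p)) (α ε : ℝ)
    (hα : (A.card : ℝ) = α * (p : ℝ) ^ n) (hα0 : 0 < α) (hα1 : α ≤ 1)
    (hε0 : 0 < ε) (hε1 : ε < 1) :
    ∃ V : Submodule (ZMod p) (Fin n → ZMod p),
      (Module.finrank (ZMod p) V : ℝ) ≤ 2 / ε ^ 2 * Real.log (1 / α) ∧
      ∀ ξ ∉ V,
        (∑ t, ‖(∑ w : perp p n V,
                ind A (t + (w : Fin n → ZMod p)) *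
                  (starRingEnd ℂ) (chi p n ξ (t + (w : Fin n → ZMod p))))
              / (Fintype.card (perp p n V) : ℂ)‖) / (p : ℝ) ^ n
          ≤ ε * α :=
  strengthened_chang_general p n hp A α ε hα hα0 hε0
end

section
/- Let A ⊆ 𝔽_p^n have density α ∈ (0,1] and let ε ∈ (0,1). Then there exists a subspace V ≤ 𝔽_p^n with dim(V) ≤ (2/ε²)·log(1/α) such that Spec_ε(A) ⊆ V, where Spec_ε(A) = {ξ : |1_A^(ξ)| > εα}. -/
open scoped Classical BigOperators
open Finset

/-!
Let `ξ₁, …, ξₖ` be a maximal linearly independent family in the large spectrum, choose phases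
`cᵢ` with `cᵢ · 1̂_A(ξᵢ) = |1̂_A(ξᵢ)|` and put `f(x) = ∑ᵢ Re (cᵢ · conj χ_{ξᵢ}(x))`, so that `f`
averages more than `kε` over `A`. Linear independence makes the values `⟨ξᵢ, x⟩` independent and
uniform for uniform `x`, and each summand of `f` is bounded by `1` with mean zero, so Hoeffding's
bound gives `𝔼ₓ e^{εf(x)} ≤ e^{kε²/2}`. Jensen's inequality on `A` bounds the same average below
by `α e^{kε²}`, whence `kε²/2 ≤ log (1/α)`.
-/

open ComplexConjugate Real

theorem exp_mul_le_cosh_add_mul_sinh (l : ℝ) {c : ℝ} (hc : |c| ≤ 1) :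
    exp (l * c) ≤ cosh l + c * sinh l := by
  obtain ⟨hc₁, hc₂⟩ := abs_le.1 hc
  have := convexOn_exp.2 (Set.mem_univ (-l)) (Set.mem_univ l)
    (by linarith : (0 : ℝ) ≤ (1 - c) / 2) (by linarith : (0 : ℝ) ≤ (1 + c) / 2) (by ring)
  simp only [smul_eq_mul] at this
  calc exp (l * c) = exp ((1 - c) / 2 * -l + (1 + c) / 2 * l) := by ring_nf
    _ ≤ (1 - c) / 2 * exp (-l) + (1 + c) / 2 * exp l := this
    _ = cosh l + c * sinh l := by rw [cosh_eq, sinh_eq]; ring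

theorem sum_exp_mul_le_card_mul_exp {ι : Type*} [Fintype ι] {v : ι → ℝ} (hv : ∀ i, |v i| ≤ 1)
    (hv₀ : ∑ i, v i = 0) (l : ℝ) :
    ∑ i, exp (l * v i) ≤ Fintype.card ι * exp (l ^ 2 / 2) :=
  calc ∑ i, exp (l * v i) ≤ ∑ i, (cosh l + v i * sinh l) :=
        Finset.sum_le_sum fun i _ ↦ exp_mul_le_cosh_add_mul_sinh l (hv i)
    _ = Fintype.card ι * cosh l := by
        rw [Finset.sum_add_distrib, ← Finset.sum_mul, hv₀]; simp
    _ ≤ Fintype.card ι * exp (l ^ 2 / 2) := by gcongr; exact cosh_le_exp_half_sq l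

theorem card_mul_exp_le_sum_exp {ι : Type*} (s : Finset ι) (f : ι → ℝ) {m : ℝ}
    (hm : #s * m ≤ ∑ i ∈ s, f i) : #s * exp m ≤ ∑ i ∈ s, exp (f i) :=
  calc #s * exp m ≤ ∑ i ∈ s, exp m * (f i - m + 1) := by
        rw [← Finset.mul_sum, Finset.sum_add_distrib, Finset.sum_sub_distrib]
        simp only [Finset.sum_const, nsmul_eq_mul, mul_one]
        nlinarith [exp_pos m]
    _ ≤ ∑ i ∈ s, exp (f i) := Finset.sum_le_sum fun i _ ↦ by
        calc exp m * (f i - m + 1) ≤ exp m * exp (f i - m) :=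
              mul_le_mul_of_nonneg_left (add_one_le_exp _) (exp_pos m).le
          _ = exp (f i) := by rw [← exp_add]; ring_nf

theorem exists_norm_le_one_re_mul_eq_norm (z : ℂ) : ∃ c : ℂ, ‖c‖ ≤ 1 ∧ (c * z).re = ‖z‖ := by
  rcases eq_or_ne z 0 with rfl | hz
  · exact ⟨0, by simp⟩
  refine ⟨conj z / ‖z‖, ?_, ?_⟩
  · rw [norm_div, Complex.norm_conj, Complex.norm_real, norm_norm, div_self (norm_ne_zero_iff.2 hz)]
  · rw [div_mul_eq_mul_div, mul_comm, Complex.mul_conj, Complex.normSq_eq_norm_sq]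
    norm_cast
    field_simp

namespace AddChar

variable {G : Type*} [AddCommGroup G] [Fintype G]

theorem abs_re_mul_conj_le_one (ψ : AddChar G ℂ) {c : ℂ} (hc : ‖c‖ ≤ 1) (t : G) :
    |(c * conj (ψ t)).re| ≤ 1 :=
  calc |(c * conj (ψ t)).re| ≤ ‖c * conj (ψ t)‖ := Complex.abs_re_le_norm _
    _ ≤ 1 := by rw [norm_mul, Complex.norm_conj, ψ.norm_apply, mul_one]; exact hc

theorem sum_re_mul_conj_eq_zero {ψ : AddChar G ℂ} (hψ : ψ ≠ 1) (c : ℂ) :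
    ∑ t, (c * conj (ψ t)).re = 0 := by
  rw [← Complex.re_sum, ← Finset.mul_sum, ← map_sum, sum_eq_zero_of_ne_one hψ]; simp

end AddChar

theorem AddMonoidHom.card_nsmul_sum_comp_of_surjective {G H M : Type*} [AddGroup G] [Fintype G]
    [AddMonoid H] [Fintype H] [DecidableEq H] [AddCommMonoid M] (f : G →+ H)
    (hf : Function.Surjective f) (F : H → M) :
    Fintype.card H • ∑ g, F (f g) = Fintype.card G • ∑ h, F h := by
  have hfiber (h : H) : #{g | f g = h} = #{g | f g = 0} :=
    card_fiber_eq_of_mem_range f (hf h) (hf 0)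
  have hsum : ∑ g, F (f g) = #{g | f g = 0} • ∑ h, F h := by
    rw [← Finset.sum_fiberwise _ f, Finset.smul_sum]
    refine Finset.sum_congr rfl fun h _ ↦ ?_
    rw [Finset.sum_congr rfl fun g hg ↦ by rw [(Finset.mem_filter.1 hg).2], Finset.sum_const,
      hfiber]
  have hcard : Fintype.card G = Fintype.card H * #{g | f g = 0} := by
    rw [← Finset.card_univ, Finset.card_eq_sum_card_fiberwise (t := Finset.univ)
      (fun g _ ↦ Finset.mem_univ (f g))]
    simp [hfiber]
  rw [hsum, hcard, mul_nsmul']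

theorem Matrix.mulVec_surjective_of_linearIndependent {ι n K : Type*} [Field K] [Fintype ι]
    [Fintype n] {M : Matrix ι n K} (hM : LinearIndependent K M.row) :
    Function.Surjective M.mulVec := by
  rw [← Matrix.coe_mulVecLin, ← LinearMap.range_eq_top]
  apply Submodule.eq_top_of_finrank_eq
  rw [← Matrix.rank, hM.rank_matrix, Module.finrank_fintype_fun_eq_card]

section LinearForms

variable {K ι n : Type*} [Field K] [Fintype K] [Fintype ι] [Fintype n]

theorem card_pow_mul_sum_prod_dotProduct {R : Type*} [CommSemiring R] {ξ : ι → n → K}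
    (hξ : LinearIndependent K ξ) (g : ι → K → R) :
    (Fintype.card K : R) ^ Fintype.card ι * ∑ x : n → K, ∏ i, g i (ξ i ⬝ᵥ x) =
      (Fintype.card K : R) ^ Fintype.card n * ∏ i, ∑ t, g i t := by
  have h := (Matrix.mulVecLin (Matrix.of ξ)).toAddMonoidHom.card_nsmul_sum_comp_of_surjective
    (Matrix.mulVec_surjective_of_linearIndependent hξ) fun y ↦ ∏ i, g i (y i)
  simp only [Fintype.card_fun, nsmul_eq_mul, Nat.cast_pow, ← Fintype.prod_sum] at h
  exact h

theorem sum_exp_mul_sum_le {ξ : ι → n → K} (hξ : LinearIndependent K ξ) {v : ι → K → ℝ}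
    (hv : ∀ i t, |v i t| ≤ 1) (hv₀ : ∀ i, ∑ t, v i t = 0) (l : ℝ) :
    ∑ x : n → K, exp (l * ∑ i, v i (ξ i ⬝ᵥ x)) ≤
      Fintype.card K ^ Fintype.card n * exp (Fintype.card ι * (l ^ 2 / 2)) := by
  have hK : (0 : ℝ) < Fintype.card K ^ Fintype.card ι := by positivity
  refine le_of_mul_le_mul_left ?_ hK
  simp only [Finset.mul_sum (s := Finset.univ) (a := l), exp_sum]
  rw [card_pow_mul_sum_prod_dotProduct hξ fun i t ↦ exp (l * v i t)]
  calc (Fintype.card K : ℝ) ^ Fintype.card n * ∏ i, ∑ t, exp (l * v i t)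
      ≤ Fintype.card K ^ Fintype.card n * ∏ _i : ι, Fintype.card K * exp (l ^ 2 / 2) := by
        gcongr with i
        exact sum_exp_mul_le_card_mul_exp (hv i) (hv₀ i) l
    _ = _ := by
        rw [Finset.prod_const, mul_pow, ← exp_nat_mul, Finset.card_univ]; ring

theorem card_mul_exp_le_of_linearIndependent {ψ : AddChar K ℂ} (hψ : ψ ≠ 1) (A : Finset (n → K))
    {ξ : ι → n → K} (hξ : LinearIndependent K ξ) {ε : ℝ} (hε : 0 ≤ ε)
    (hspec : ∀ i, ε * #A ≤ ‖∑ x ∈ A, conj (ψ (ξ i ⬝ᵥ x))‖) :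
    #A * exp (Fintype.card ι * (ε ^ 2 / 2)) ≤ Fintype.card K ^ Fintype.card n := by
  choose c hc hcS using fun i ↦ exists_norm_le_one_re_mul_eq_norm (∑ x ∈ A, conj (ψ (ξ i ⬝ᵥ x)))
  set v : ι → K → ℝ := fun i t ↦ (c i * conj (ψ t)).re
  have hcorr : #A * (Fintype.card ι * ε ^ 2) ≤ ∑ x ∈ A, ε * ∑ i, v i (ξ i ⬝ᵥ x) := by
    have hsum : ∑ x ∈ A, ∑ i, v i (ξ i ⬝ᵥ x) = ∑ i, ‖∑ x ∈ A, conj (ψ (ξ i ⬝ᵥ x))‖ := by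
      simp only [v, ← hcS, Finset.mul_sum, Complex.re_sum]
      exact Finset.sum_comm
    rw [← Finset.mul_sum, hsum, Finset.mul_sum]
    calc (#A : ℝ) * (Fintype.card ι * ε ^ 2) = ∑ _i : ι, ε * (ε * #A) := by simp; ring
      _ ≤ _ := by gcongr with i; exact hspec i
  have hmoment := sum_exp_mul_sum_le hξ (fun i ↦ ψ.abs_re_mul_conj_le_one (hc i))
    (fun i ↦ AddChar.sum_re_mul_conj_eq_zero hψ (c i)) ε
  have hA := card_mul_exp_le_sum_exp A _ hcorr
  have hsub : ∑ x ∈ A, exp (ε * ∑ i, v i (ξ i ⬝ᵥ x)) ≤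
      ∑ x : n → K, exp (ε * ∑ i, v i (ξ i ⬝ᵥ x)) :=
    Finset.sum_le_univ_sum_of_nonneg fun x ↦ (exp_pos _).le
  have hsplit : exp (Fintype.card ι * ε ^ 2) =
      exp (Fintype.card ι * (ε ^ 2 / 2)) * exp (Fintype.card ι * (ε ^ 2 / 2)) := by
    rw [← exp_add]; ring_nf
  rw [hsplit, ← mul_assoc] at hA
  exact le_of_mul_le_mul_right (hA.trans (hsub.trans hmoment)) (exp_pos _)

end LinearForms

theorem chi_eq_stdAddChar (p n : ℕ) [NeZero p] (ξ x : Fin n → ZMod p) :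
    chi p n ξ x = ZMod.stdAddChar (ξ ⬝ᵥ x) := by
  rw [chi, ZMod.stdAddChar_apply, ZMod.toCircle_apply]; rfl

theorem ft_ind (p n : ℕ) [NeZero p] (A : Finset (Fin n → ZMod p)) (ξ : Fin n → ZMod p) :
    ft p n (ind A) ξ = (∑ x ∈ A, conj (ZMod.stdAddChar (ξ ⬝ᵥ x))) / (p : ℂ) ^ n := by
  simp [ft, ind, chi_eq_stdAddChar, Finset.sum_ite_mem]

theorem chang_lemma_general (p n : ℕ) (hp : p.Prime) [NeZero p]
    (A : Finset (Fin n → ZMod p)) (α ε : ℝ)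
    (hα : (A.card : ℝ) = α * (p : ℝ) ^ n) (hα0 : 0 < α)
    (hε0 : 0 < ε) :
    ∃ V : Submodule (ZMod p) (Fin n → ZMod p),
      (Module.finrank (ZMod p) V : ℝ) ≤ 2 / ε ^ 2 * Real.log (1 / α) ∧
      ∀ ξ : Fin n → ZMod p, ε * α < ‖ft p n (ind A) ξ‖ → ξ ∈ V := by
  have : Fact p.Prime := ⟨hp⟩
  obtain ⟨B, hBS, hspan, hB⟩ :=
    exists_linearIndependent (ZMod p) {ξ | ε * α < ‖ft p n (ind A) ξ‖}
  refine ⟨Submodule.span (ZMod p) B, ?_, fun ξ hξ ↦ hspan ▸ Submodule.subset_span hξ⟩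
  have hpn : (0 : ℝ) < (p : ℝ) ^ n := pow_pos (Nat.cast_pos.2 hp.pos) n
  have hψ : (ZMod.stdAddChar : AddChar (ZMod p) ℂ) ≠ 1 := by
    simpa using ZMod.isPrimitive_stdAddChar p one_ne_zero
  have hlarge (ξ : B) : ε * #A ≤ ‖∑ x ∈ A, conj (ZMod.stdAddChar ((ξ : Fin n → ZMod p) ⬝ᵥ x))‖ := by
    have := (show ε * α < _ from hBS ξ.2).le
    rwa [ft_ind, norm_div, norm_pow, Complex.norm_natCast, le_div_iff₀ hpn, mul_assoc, ← hα] at this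
  have hbound := card_mul_exp_le_of_linearIndependent hψ A hB hε0.le hlarge
  rw [hα, ZMod.card, Fintype.card_fin, mul_assoc, mul_comm, mul_assoc] at hbound
  have hexp : exp (Fintype.card B * (ε ^ 2 / 2)) ≤ 1 / α := by
    rw [le_div_iff₀ hα0]; nlinarith
  have hlog := (le_log_iff_exp_le (by positivity)).2 hexp
  rw [← Subtype.range_coe (s := B), finrank_span_eq_card hB, div_mul_eq_mul_div,
    le_div_iff₀ (by positivity)]
  linarith

/-- Chang's lemma over `𝔽_p^n`: the large spectrum lies in a low-dimensional subspace. -/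
theorem chang_lemma (p n : ℕ) (hp : p.Prime) [NeZero p]
    (A : Finset (Fin n → ZMod p)) (α ε : ℝ)
    (hα : (A.card : ℝ) = α * (p : ℝ) ^ n) (hα0 : 0 < α) (hα1 : α ≤ 1)
    (hε0 : 0 < ε) (hε1 : ε < 1) :
    ∃ V : Submodule (ZMod p) (Fin n → ZMod p),
      (Module.finrank (ZMod p) V : ℝ) ≤ 2 / ε ^ 2 * Real.log (1 / α) ∧
      ∀ ξ : Fin n → ZMod p, ε * α < ‖ft p n (ind A) ξ‖ → ξ ∈ V :=
  chang_lemma_general p n hp A α ε hα hα0 hε0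
end

section
/- Let G be a finite abelian group, A ⊆ G of density α > 0, and ε ∈ (0,1). Then there exists a dissociated set Λ ⊆ Ĝ with |Λ| ≤ (2/ε²)·log(1/α) such that every character ξ ∈ Ĝ outside the {-1,0,1}-span ⟨Λ⟩ satisfies |𝔼_{x∼μ_A} conj(ξ(x))| ≤ ε, where μ_A is the uniform probability measure on A. -/
open scoped Classical BigOperators
open Finset

noncomputable instance addCharFintype (G : Type*) [AddCommGroup G] [Fintype G] :
    Fintype (AddChar G ℂ) := Fintype.ofFinite _

/-- Fourier transform on a finite abelian group: `f^(ψ) = 𝔼_x f(x) conj(ψ(x))`. -/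
noncomputable def ftG {G : Type*} [AddCommGroup G] [Fintype G] (f : G → ℂ)
    (ψ : AddChar G ℂ) : ℂ :=
  (∑ x, f x * (starRingEnd ℂ) (ψ x)) / (Fintype.card G : ℂ)

/-- The `{-1,0,1}`-span of a finite set of characters. -/
def spanSet {G : Type*} [AddCommGroup G] [Fintype G] (Λ : Finset (AddChar G ℂ)) :
    Set (AddChar G ℂ) :=
  {ψ | ∃ η : AddChar G ℂ → ℤ, (∀ l, η l ∈ ({-1, 0, 1} : Set ℤ)) ∧
        ∀ x, ψ x = ∏ l ∈ Λ, (l x) ^ (η l)}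

/-- A finite set of characters is dissociated if the only `{-1,0,1}`-relation
among its elements is the trivial one. -/
def Dissociated {G : Type*} [AddCommGroup G] [Fintype G] (Λ : Finset (AddChar G ℂ)) : Prop :=
  ∀ η : AddChar G ℂ → ℤ, (∀ l, η l ∈ ({-1, 0, 1} : Set ℤ)) →
    (∀ x, ∏ l ∈ Λ, (l x) ^ (η l) = 1) → ∀ l ∈ Λ, η l = 0

/-- The fourfold convolution count `Λ₄(f₁,f₂,f₃,f₄)`, an average over quadruples
with `x₁ + x₂ = x₃ + x₄`. -/
noncomputable def L4 {G : Type*} [AddCommGroup G] [Fintype G]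
    (f₁ f₂ f₃ f₄ : G → ℂ) : ℂ :=
  (∑ x₁, ∑ x₂, ∑ x₃, f₁ x₁ * f₂ x₂ * (starRingEnd ℂ) (f₃ x₃ * f₄ (x₁ + x₂ - x₃)))
    / (Fintype.card G : ℂ) ^ 3

/-!
Let `Λ` be a maximal dissociated subset of the set of characters `ξ` with
`‖𝔼_{x ∈ A} conj (ξ x)‖ > ε`; maximality puts every such character in the `{-1,0,1}`-span of `Λ`.
To bound `|Λ|`, turn each `ψ ∈ Λ` by the phase of its coefficient, so that
`h = ∑_{ψ ∈ Λ} Re (d_ψ ψ)` has average at least `ε |Λ|` on `A`. Jensen gives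
`|A| e^{ε² |Λ|} ≤ ∑_{x ∈ A} e^{ε h x}`. On the other hand the characters of a dissociated set behave
like independent random signs, so `∑_{x ∈ G} e^{ε h x} ≤ |G| cosh(ε)^|Λ| ≤ |G| e^{ε² |Λ| / 2}`.
Comparing the two bounds gives `|Λ| ≤ 2 ε⁻² log (1 / α)`.
-/

open scoped ComplexConjugate

lemma Complex.re_div_norm_mul_conj (z : ℂ) : (z / ‖z‖ * conj z).re = ‖z‖ := by
  rw [div_mul_eq_mul_div, Complex.mul_conj, Complex.normSq_eq_norm_sq]
  rcases eq_or_ne ‖z‖ 0 with h | h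
  · simp [h]
  · rw [← Complex.ofReal_div, Complex.ofReal_re]
    field_simp

lemma Finset.card_mul_exp_sum_div_card_le {ι : Type*} (s : Finset ι) (f : ι → ℝ) :
    #s * Real.exp ((∑ i ∈ s, f i) / #s) ≤ ∑ i ∈ s, Real.exp (f i) := by
  rcases s.eq_empty_or_nonempty with rfl | hs
  · simp
  have hcard : (0 : ℝ) < #s := by exact_mod_cast hs.card_pos
  have hjensen := convexOn_exp.map_sum_le (t := s) (w := fun _ => (#s : ℝ)⁻¹) (p := f)
    (fun _ _ => by positivity) (by simp [hcard.ne']) (fun _ _ => Set.mem_univ _)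
  simp only [smul_eq_mul, ← mul_sum] at hjensen
  rw [div_eq_inv_mul]
  calc #s * Real.exp ((#s : ℝ)⁻¹ * ∑ i ∈ s, f i)
      ≤ #s * ((#s : ℝ)⁻¹ * ∑ i ∈ s, Real.exp (f i)) := by gcongr
    _ = ∑ i ∈ s, Real.exp (f i) := by field_simp

namespace Finset

variable {α : Type*} [AddCommGroup α] [Fintype α] [DecidableEq α] {t : Finset α} {a : α}

lemma mem_addSpan_of_not_addDissociated_insert (ht : AddDissociated (t : Set α))
    (hat : ¬ AddDissociated (insert a t : Set α)) : a ∈ addSpan t := by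
  -- in a relation `∑ t₁ = ∑ t₂` among elements of `insert a t`, `a` occurs on one side only
  have key (t₁ t₂ : Finset α) (h₁ : (t₁ : Set α) ⊆ insert a t) (h₂ : (t₂ : Set α) ⊆ insert a t)
      (hdisj : Disjoint t₁ t₂) (hsum : ∑ b ∈ t₁, b = ∑ b ∈ t₂, b) (ha : a ∈ t₁) :
      a ∈ addSpan t := by
    have h₂t : t₂ ⊆ t := by
      rwa [← coe_subset, ← Set.subset_insert_iff_of_notMem (disjoint_left.1 hdisj ha)]
    have h₁t : t₁.erase a ⊆ t := by
      rw [← coe_subset, coe_erase]; exact Set.sdiff_singleton_subset_iff.2 h₁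
    have : a = ∑ b ∈ t₂, b - ∑ b ∈ t₁.erase a, b := by
      rw [sum_erase_eq_sub ha, hsum, sub_sub_cancel]
    exact this ▸ sum_sub_sum_mem_addSpan h₂t h₁t
  obtain ⟨t₁, t₂, h₁, h₂, hdisj, hne, hsum⟩ := not_addDissociated_iff_exists_disjoint.1 hat
  by_cases ha₁ : a ∈ t₁
  · exact key t₁ t₂ h₁ h₂ hdisj hsum ha₁
  by_cases ha₂ : a ∈ t₂
  · exact key t₂ t₁ h₂ h₁ hdisj.symm hsum.symm ha₂
  rw [Set.subset_insert_iff_of_notMem (mem_coe.not.2 ha₁)] at h₁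
  rw [Set.subset_insert_iff_of_notMem (mem_coe.not.2 ha₂)] at h₂
  exact absurd ht (not_addDissociated_iff_exists_disjoint.2 ⟨t₁, t₂, h₁, h₂, hdisj, hne, hsum⟩)

lemma exists_addDissociated_subset_addSpan (s : Finset α) :
    ∃ t ⊆ s, AddDissociated (t : Set α) ∧ s ⊆ addSpan t := by
  obtain ⟨t, ht⟩ :=
    (s.powerset.filter fun t : Finset α => AddDissociated (t : Set α)).exists_maximal
      ⟨∅, mem_filter.2 ⟨empty_mem_powerset _, by simp⟩⟩
  simp only [mem_filter, mem_powerset] at ht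
  refine ⟨t, ht.1.1, ht.1.2, fun a ha => ?_⟩
  by_cases hat : a ∈ t
  · exact subset_addSpan hat
  refine mem_addSpan_of_not_addDissociated_insert ht.1.2 fun h => ?_
  exact ht.not_gt ⟨insert_subset ha ht.1.1, by simpa using h⟩ (ssubset_insert hat)

end Finset

section AddChar

variable {G : Type*} [AddCommGroup G] [Fintype G]

lemma AddDissociated.sum_prod_add_re {Λ : Finset (AddChar G ℂ)}
    (hΛ : AddDissociated (Λ : Set (AddChar G ℂ))) (a : AddChar G ℂ → ℝ) (d : AddChar G ℂ → ℂ) :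
    ∑ x, ∏ ψ ∈ Λ, (a ψ + (d ψ * ψ x).re) = Fintype.card G * ∏ ψ ∈ Λ, a ψ := by
  have hrand := AddDissociated.randomisation (fun ψ => if ψ ∈ Λ then a ψ else 1)
    (fun ψ => if ψ ∈ Λ then d ψ else 0)
    (hΛ.subset fun ψ hψ => by by_contra h; exact hψ (if_neg h))
  have hfactor (x : G) : ∏ ψ, ((if ψ ∈ Λ then a ψ else 1) + ((if ψ ∈ Λ then d ψ else 0) * ψ x).re)
      = ∏ ψ ∈ Λ, (a ψ + (d ψ * ψ x).re) := by
    rw [← Fintype.prod_ite_mem Λ fun ψ => a ψ + (d ψ * ψ x).re]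
    exact Fintype.prod_congr _ _ fun ψ => by by_cases hψ : ψ ∈ Λ <;> simp [hψ]
  simp only [hfactor, Fintype.prod_ite_mem, Fintype.expect_eq_sum_div_card] at hrand
  rw [← hrand]
  field_simp

lemma AddDissociated.sum_exp_mul_sum_re_le {Λ : Finset (AddChar G ℂ)}
    (hΛ : AddDissociated (Λ : Set (AddChar G ℂ))) {d : AddChar G ℂ → ℂ}
    (hd : ∀ ψ ∈ Λ, ‖d ψ‖ ≤ 1) (t : ℝ) :
    ∑ x, Real.exp (t * ∑ ψ ∈ Λ, (d ψ * ψ x).re) ≤ Fintype.card G * Real.exp (t ^ 2 * #Λ / 2) :=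
  calc ∑ x, Real.exp (t * ∑ ψ ∈ Λ, (d ψ * ψ x).re)
      ≤ ∑ x, ∏ ψ ∈ Λ, (Real.cosh t + (Real.sinh t * d ψ * ψ x).re) := by
        gcongr with x
        rw [mul_sum, Real.exp_sum]
        refine prod_le_prod (fun _ _ => (Real.exp_pos _).le) fun ψ hψ => ?_
        have hre : |(d ψ * ψ x).re| ≤ 1 :=
          (Complex.abs_re_le_norm _).trans (by simpa [AddChar.norm_apply] using hd ψ hψ)
        rw [mul_assoc, Complex.re_ofReal_mul, mul_comm t, mul_comm (Real.sinh t)]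
        exact Real.exp_mul_le_cosh_add_mul_sinh hre t
    _ = Fintype.card G * Real.cosh t ^ #Λ := by
        rw [hΛ.sum_prod_add_re, prod_const]
    _ ≤ Fintype.card G * Real.exp (t ^ 2 * #Λ / 2) := by
        rw [show t ^ 2 * #Λ / 2 = #Λ * (t ^ 2 / 2) by ring, Real.exp_nat_mul]
        gcongr
        exact Real.cosh_le_exp_half_sq t

lemma AddDissociated.card_le_of_le_norm_sum_div_card {Λ : Finset (AddChar G ℂ)}
    (hΛ : AddDissociated (Λ : Set (AddChar G ℂ))) {A : Finset G} (hA : A.Nonempty)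
    {ε : ℝ} (hε : 0 < ε)
    (hΛA : ∀ ψ ∈ Λ, ε ≤ ‖(∑ x ∈ A, conj (ψ x)) / #A‖) :
    (#Λ : ℝ) ≤ 2 / ε ^ 2 * Real.log (Fintype.card G / #A) := by
  have hAcard : (0 : ℝ) < #A := by exact_mod_cast hA.card_pos
  set S : AddChar G ℂ → ℂ := fun ψ => ∑ x ∈ A, conj (ψ x)
  have hS (ψ) (hψ : ψ ∈ Λ) : ε * #A ≤ ‖S ψ‖ := by
    simpa [le_div_iff₀ hAcard] using hΛA ψ hψ
  set d : AddChar G ℂ → ℂ := fun ψ => S ψ / ‖S ψ‖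
  set h : G → ℝ := fun x => ∑ ψ ∈ Λ, (d ψ * ψ x).re
  have hd (ψ) (_ : ψ ∈ Λ) : ‖d ψ‖ ≤ 1 := by
    simp only [d, norm_div, Complex.norm_real, norm_norm]
    exact div_self_le_one _
  have hsum_h : ε * #A * #Λ ≤ ∑ x ∈ A, h x := by
    have : ∑ x ∈ A, h x = ∑ ψ ∈ Λ, ‖S ψ‖ := by
      simp only [h, d, S]
      rw [sum_comm]
      refine sum_congr rfl fun ψ _ => ?_
      rw [← Complex.re_sum, ← mul_sum, ← Complex.conj_conj (∑ x ∈ A, ψ x), map_sum]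
      exact Complex.re_div_norm_mul_conj _
    rw [this, mul_comm, ← nsmul_eq_mul, ← sum_const]
    exact sum_le_sum hS
  have hexp : #A * Real.exp (ε ^ 2 * #Λ) ≤ Fintype.card G * Real.exp (ε ^ 2 * #Λ / 2) :=
    calc #A * Real.exp (ε ^ 2 * #Λ) ≤ #A * Real.exp ((∑ x ∈ A, ε * h x) / #A) := by
          gcongr
          rw [← mul_sum, le_div_iff₀ hAcard]
          nlinarith
      _ ≤ ∑ x ∈ A, Real.exp (ε * h x) := A.card_mul_exp_sum_div_card_le _
      _ ≤ ∑ x, Real.exp (ε * h x) :=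
          sum_le_sum_of_subset_of_nonneg (subset_univ A) fun _ _ _ => (Real.exp_pos _).le
      _ ≤ Fintype.card G * Real.exp (ε ^ 2 * #Λ / 2) := hΛ.sum_exp_mul_sum_re_le hd ε
  have hlog : ε ^ 2 * #Λ / 2 ≤ Real.log (Fintype.card G / #A) := by
    rw [Real.le_log_iff_exp_le (by positivity), le_div_iff₀ hAcard]
    have hsplit :
        Real.exp (ε ^ 2 * #Λ) = Real.exp (ε ^ 2 * #Λ / 2) * Real.exp (ε ^ 2 * #Λ / 2) := by
      rw [← Real.exp_add, add_halves]
    rw [hsplit] at hexp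
    exact le_of_mul_le_mul_right (by linarith) (Real.exp_pos (ε ^ 2 * #Λ / 2))
  rw [div_mul_eq_mul_div, le_div_iff₀ (by positivity)]
  linarith

lemma AddDissociated.dissociated {Λ : Finset (AddChar G ℂ)}
    (hΛ : AddDissociated (Λ : Set (AddChar G ℂ))) : Dissociated Λ := by
  intro η hη hrel
  have hη' (l) : η l = -1 ∨ η l = 0 ∨ η l = 1 := by simpa using hη l
  set t := Λ.filter (η · = 1)
  set u := Λ.filter (η · = -1)
  have hzero : ∑ l ∈ Λ, η l • l = 0 := by
    ext x
    simp [AddChar.sum_apply, hrel x]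
  have hsplit : ∑ l ∈ Λ, η l • l = ∑ l ∈ t, l - ∑ l ∈ u, l := by
    rw [sum_filter, sum_filter, ← sum_sub_distrib]
    refine sum_congr rfl fun l _ => ?_
    rcases hη' l with h | h | h <;> simp [h]
  have htu : t = u := hΛ (by simp [t]) (by simp [u]) (sub_eq_zero.1 (hsplit ▸ hzero))
  intro l hl
  rcases hη' l with h | h | h
  · have : l ∈ t := htu ▸ mem_filter.2 ⟨hl, h⟩
    simp [t, h] at this
  · exact h
  · have : l ∈ u := htu ▸ mem_filter.2 ⟨hl, h⟩
    simp [u, h] at this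

lemma addSpan_subset_spanSet (Λ : Finset (AddChar G ℂ)) :
    (addSpan Λ : Set (AddChar G ℂ)) ⊆ spanSet Λ := by
  intro ψ hψ
  obtain ⟨η, hη, rfl⟩ := mem_addSpan.1 hψ
  refine ⟨η, fun l => ?_, fun x => by simp [AddChar.sum_apply]⟩
  rcases hη l with h | h | h <;> simp [h]

end AddChar

theorem chang_abelian_general {G : Type*} [AddCommGroup G] [Fintype G]
    (A : Finset G) (α ε : ℝ) (hα : (A.card : ℝ) = α * (Fintype.card G : ℝ))
    (hα0 : 0 < α) (hε0 : 0 < ε) :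
    ∃ Λ : Finset (AddChar G ℂ),
      Dissociated Λ ∧
      (Λ.card : ℝ) ≤ 2 / ε ^ 2 * Real.log (1 / α) ∧
      ∀ ξ : AddChar G ℂ, ξ ∉ spanSet Λ →
        ‖(∑ x ∈ A, (starRingEnd ℂ) (ξ x)) / (A.card : ℂ)‖ ≤ ε := by
  have hG : (0 : ℝ) < Fintype.card G := by exact_mod_cast Fintype.card_pos
  have hA : A.Nonempty := by
    rw [← card_pos, ← Nat.cast_pos (α := ℝ), hα]; positivity
  obtain ⟨Λ, hΛspec, hΛ, hspecΛ⟩ := exists_addDissociated_subset_addSpan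
    (univ.filter fun ξ : AddChar G ℂ => ε < ‖(∑ x ∈ A, conj (ξ x)) / #A‖)
  refine ⟨Λ, hΛ.dissociated, ?_, fun ξ hξ => ?_⟩
  · have hlarge (ψ) (hψ : ψ ∈ Λ) : ε ≤ ‖(∑ x ∈ A, conj (ψ x)) / #A‖ :=
      (mem_filter.1 (hΛspec hψ)).2.le
    have := hΛ.card_le_of_le_norm_sum_div_card hA hε0 hlarge
    rwa [hα, div_mul_cancel_right₀ hG.ne', ← one_div] at this
  · by_contra! hlarge
    exact hξ (addSpan_subset_spanSet Λ (hspecΛ (mem_filter.2 ⟨mem_univ ξ, hlarge⟩)))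

/-- Chang's lemma for finite abelian groups. -/
theorem chang_abelian {G : Type*} [AddCommGroup G] [Fintype G]
    (A : Finset G) (α ε : ℝ) (hα : (A.card : ℝ) = α * (Fintype.card G : ℝ))
    (hα0 : 0 < α) (hε0 : 0 < ε) (hε1 : ε < 1) :
    ∃ Λ : Finset (AddChar G ℂ),
      Dissociated Λ ∧
      (Λ.card : ℝ) ≤ 2 / ε ^ 2 * Real.log (1 / α) ∧
      ∀ ξ : AddChar G ℂ, ξ ∉ spanSet Λ →
        ‖(∑ x ∈ A, (starRingEnd ℂ) (ξ x)) / (A.card : ℂ)‖ ≤ ε :=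
  chang_abelian_general A α ε hα hα0 hε0
end

section
/- Let μ and ν be probability measures on a finite set X with μ absolutely continuous with respect to ν, let ε ∈ (0,1), and let d : X → [-1,1] satisfy 𝔼_{x∼ν} d(x) = 0 and 𝔼_{x∼μ} d(x) ≥ ε. Define ν'(x) = (1+ε·d(x))·ν(x). Then ν' is a probability measure and D(μ‖ν') ≤ D(μ‖ν) − ε²/2, where D denotes Kullback–Leibler divergence. -/
open scoped BigOperators
open Finset

/-- Kullback–Leibler divergence of two measures on a finite set
(with the convention `0 · log 0 = 0`, which holds for `Real.log`). -/
noncomputable def KL {X : Type*} [Fintype X] (μ ν : X → ℝ) : ℝ :=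
  ∑ x, μ x * Real.log (μ x / ν x)

/-!
Reweighting `ν` by `1 + ε d` lowers `D(μ‖·)` by exactly `𝔼_μ log (1 + ε d)`. On `[-1, 1]` the concave
function `t ↦ log (1 + ε t)` lies above its chord, which is affine and increasing in `t`, so this
expectation is at least the chord at `𝔼_μ d ≥ ε`, hence at least its value at `ε`, namely
`h(ε) = ((1+ε)/2) log (1+ε) + ((1-ε)/2) log (1-ε)`.
Finally `h(ε) ≥ ε²/2`, because `(2h(ε) - ε²)' = log (1+ε) - log (1-ε) - 2ε`, which is nonnegative
by the power series of `log (1+ε) - log (1-ε)`.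
-/

open Real

theorem two_mul_le_log_one_add_sub_log_one_sub {t : ℝ} (ht₀ : 0 ≤ t) (ht₁ : t < 1) :
    2 * t ≤ log (1 + t) - log (1 - t) := by
  have hseries := hasSum_log_sub_log_of_abs_lt_one (abs_lt.mpr ⟨by linarith, ht₁⟩)
  simpa using le_hasSum hseries 0 fun k _ => by positivity

theorem sq_le_mul_log_one_add_add_mul_log_one_sub {ε : ℝ} (hε₀ : 0 ≤ ε) (hε₁ : ε < 1) :
    ε ^ 2 ≤ (1 + ε) * log (1 + ε) + (1 - ε) * log (1 - ε) := by
  set φ : ℝ → ℝ := fun s => (1 + s) * log (1 + s) + (1 - s) * log (1 - s) - s ^ 2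
  have hφ_cont : Continuous φ := by
    have := continuous_mul_log
    fun_prop
  have hφ_deriv : ∀ s ∈ interior (Set.Icc 0 ε),
      HasDerivWithinAt φ (log (1 + s) - log (1 - s) - 2 * s) (interior (Set.Icc 0 ε)) s := by
    intro s hs
    rw [interior_Icc] at hs
    have hplus := (hasDerivAt_mul_log (x := 1 + s) (by linarith [hs.1])).comp s
      ((hasDerivAt_id s).const_add 1)
    have hminus := (hasDerivAt_mul_log (x := 1 - s) (by linarith [hs.2])).comp s
      ((hasDerivAt_id s).const_sub 1)
    refine ((hplus.add hminus).sub (hasDerivAt_pow 2 s)).hasDerivWithinAt.congr_deriv ?_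
    ring
  have hφ_mono : MonotoneOn φ (Set.Icc 0 ε) :=
    monotoneOn_of_hasDerivWithinAt_nonneg (convex_Icc 0 ε) hφ_cont.continuousOn hφ_deriv
      fun s hs => by
        rw [interior_Icc] at hs
        linarith [two_mul_le_log_one_add_sub_log_one_sub hs.1.le (hs.2.trans hε₁)]
  have := hφ_mono ⟨le_rfl, hε₀⟩ ⟨hε₀, le_rfl⟩ hε₀
  simp only [φ, add_zero, sub_zero, log_one, mul_zero] at this
  linarith

theorem chord_le_log_one_add_mul {ε t : ℝ} (hε₀ : -1 < ε) (hε₁ : ε < 1)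
    (ht₀ : -1 ≤ t) (ht₁ : t ≤ 1) :
    (1 + t) / 2 * log (1 + ε) + (1 - t) / 2 * log (1 - ε) ≤ log (1 + ε * t) := by
  have := strictConcaveOn_log_Ioi.concaveOn.2 (Set.mem_Ioi.2 (by linarith : (0 : ℝ) < 1 + ε))
    (Set.mem_Ioi.2 (by linarith : (0 : ℝ) < 1 - ε))
    (by linarith : (0 : ℝ) ≤ (1 + t) / 2) (by linarith : (0 : ℝ) ≤ (1 - t) / 2) (by ring)
  rwa [smul_eq_mul, smul_eq_mul, smul_eq_mul, smul_eq_mul,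
    show (1 + t) / 2 * (1 + ε) + (1 - t) / 2 * (1 - ε) = 1 + ε * t by ring] at this

theorem KL_mul_eq_sub {X : Type*} [Fintype X] (μ ν c : X → ℝ) (hc : ∀ x, c x ≠ 0)
    (hac : ∀ x, ν x = 0 → μ x = 0) :
    KL μ (fun x => c x * ν x) = KL μ ν - ∑ x, μ x * log (c x) := by
  unfold KL
  rw [← sum_sub_distrib]
  refine sum_congr rfl fun x _ => ?_
  by_cases hμx : μ x = 0
  · simp [hμx]
  · have hνx : ν x ≠ 0 := fun h => hμx (hac x h)
    rw [div_mul_eq_div_div_swap, log_div (div_ne_zero hμx hνx) (hc x)]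
    ring

theorem sq_div_two_le_sum_mul_log_one_add_mul {X : Type*} [Fintype X] (μ d : X → ℝ)
    (hμ0 : ∀ x, 0 ≤ μ x) (hμ1 : ∑ x, μ x = 1) (hd : ∀ x, -1 ≤ d x ∧ d x ≤ 1)
    {ε : ℝ} (hε₀ : 0 ≤ ε) (hε₁ : ε < 1) (hmean : ε ≤ ∑ x, d x * μ x) :
    ε ^ 2 / 2 ≤ ∑ x, μ x * log (1 + ε * d x) := by
  set a := (log (1 + ε) + log (1 - ε)) / 2
  set b := (log (1 + ε) - log (1 - ε)) / 2
  have hb : 0 ≤ b := by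
    have := log_le_log (by linarith) (by linarith : 1 - ε ≤ 1 + ε)
    simp only [b]
    linarith
  have hchord : a + b * ∑ x, d x * μ x ≤ ∑ x, μ x * log (1 + ε * d x) :=
    calc a + b * ∑ x, d x * μ x
        = ∑ x, (a * μ x + b * (d x * μ x)) := by
          rw [sum_add_distrib, ← mul_sum, ← mul_sum, hμ1, mul_one]
      _ = ∑ x, μ x * ((1 + d x) / 2 * log (1 + ε) + (1 - d x) / 2 * log (1 - ε)) :=
          sum_congr rfl fun x _ => by ring
      _ ≤ ∑ x, μ x * log (1 + ε * d x) :=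
          sum_le_sum fun x _ => mul_le_mul_of_nonneg_left
            (chord_le_log_one_add_mul (by linarith) hε₁ (hd x).1 (hd x).2) (hμ0 x)
  have hh : ε ^ 2 / 2 ≤ a + b * ε := by
    have := sq_le_mul_log_one_add_add_mul_log_one_sub hε₀ hε₁
    simp only [a, b]
    linarith
  linarith [mul_le_mul_of_nonneg_left hmean hb]

/-- The multiplicative-update step decreases the KL divergence by `ε²/2`. -/
theorem kl_decrement {X : Type*} [Fintype X]
    (μ ν : X → ℝ)
    (hμ0 : ∀ x, 0 ≤ μ x) (hμ1 : ∑ x, μ x = 1)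
    (hν0 : ∀ x, 0 ≤ ν x) (hν1 : ∑ x, ν x = 1)
    (hac : ∀ x, ν x = 0 → μ x = 0)
    (ε : ℝ) (hε0 : 0 < ε) (hε1 : ε < 1)
    (d : X → ℝ) (hd : ∀ x, -1 ≤ d x ∧ d x ≤ 1)
    (hmeanν : ∑ x, d x * ν x = 0) (hmeanμ : ε ≤ ∑ x, d x * μ x) :
    (∀ x, 0 ≤ (1 + ε * d x) * ν x) ∧
    (∑ x, (1 + ε * d x) * ν x) = 1 ∧
    KL μ (fun x => (1 + ε * d x) * ν x) ≤ KL μ ν - ε ^ 2 / 2 := by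
  have hweight : ∀ x, 0 < 1 + ε * d x := fun x => by
    linarith [mul_le_mul_of_nonneg_left (hd x).1 hε0.le]
  refine ⟨fun x => mul_nonneg (hweight x).le (hν0 x), ?_, ?_⟩
  · simp only [add_mul, one_mul, mul_assoc, sum_add_distrib, ← mul_sum, hmeanν, hν1]
    ring
  · rw [KL_mul_eq_sub μ ν _ (fun x => (hweight x).ne') hac]
    linarith [sq_div_two_le_sum_mul_log_one_add_mul μ d hμ0 hμ1 hd hε0.le hε1 hmeanμ]
end
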